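/- arXiv:1607.04255 — 4 statements merged into one kernel-verified Lean document; each statement's English description precedes it below -/
import Mathlib

section
/- (Proposition 1.) Let H ⊆ Σ* be a finite language and w : Σ* → ℝ a per-string earliness function, and suppose there exists a nonempty language K ⊆ H controllable with respect to the plant language L. Then there exists a nonempty controllable sublanguage K̂_* ⊆ H such that for every nonempty controllable sublanguage K ⊆ H: (1) e(K̂_*) ≤ e(K), and (2) if e(K) = e(K̂_*) then K ⊆ K̂_*. -/
/-! Controllability is preserved by arbitrary unions, and `H` has only finitely many
sublanguages, so the minimum earliness `m` over nonempty controllable sublanguages of `H`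
is attained. The union of all those attaining `m` is again controllable, still has
earliness `m` (each of its strings has earliness at most `m`), and by construction
contains every minimiser. -/

/-- Prefix closure of a language: all strings that can be extended to a member. -/
def pref {α : Type*} (K : Set (List α)) : Set (List α) := {s | ∃ t, s ++ t ∈ K}

/-- A language `K` is controllable w.r.t. the plant language `L` (with uncontrollable
events `Suc`) if `pref(K)·Suc ∩ L ⊆ pref(K)`. -/
def Controllable {α : Type*} (Suc : Set α) (L K : Set (List α)) : Prop :=
  ∀ s ∈ pref K, ∀ u ∈ Suc, s ++ [u] ∈ L → s ++ [u] ∈ pref K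

/-- A language is prefix-closed. -/
def PrefixClosed {α : Type*} (L : Set (List α)) : Prop :=
  ∀ s ∈ L, ∀ t : List α, t <+: s → t ∈ L

theorem pref_sUnion {α : Type*} (𝒦 : Set (Set (List α))) :
    pref (⋃₀ 𝒦) = ⋃ K ∈ 𝒦, pref K := by
  ext s
  simp only [pref, Set.mem_sUnion, Set.mem_iUnion, exists_prop]
  exact ⟨fun ⟨t, K, hK, hst⟩ => ⟨K, hK, t, hst⟩, fun ⟨K, hK, t, hst⟩ => ⟨t, K, hK, hst⟩⟩

theorem Controllable.sUnion {α : Type*} {Suc : Set α} {L : Set (List α)}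
    {𝒦 : Set (Set (List α))} (h𝒦 : ∀ K ∈ 𝒦, Controllable Suc L K) :
    Controllable Suc L (⋃₀ 𝒦) := by
  intro s hs u hu hsu
  rw [pref_sUnion, Set.mem_iUnion₂] at hs ⊢
  obtain ⟨K, hK, hsK⟩ := hs
  exact ⟨K, hK, h𝒦 K hK s hsK u hu hsu⟩

theorem csSup_image_sUnion_of_forall_eq {β : Type*} {w : β → ℝ} {F : Set (Set β)}
    (hfin : (⋃₀ F).Finite) {K₀ : Set β} (hK₀ : K₀ ∈ F) (hne : K₀.Nonempty) {m : ℝ}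
    (hF : ∀ K ∈ F, sSup (w '' K) = m) : sSup (w '' ⋃₀ F) = m := by
  have hbdd : ∀ K ⊆ ⋃₀ F, BddAbove (w '' K) := fun K hK => ((hfin.subset hK).image w).bddAbove
  apply le_antisymm
  · refine csSup_le ((hne.mono (Set.subset_sUnion_of_mem hK₀)).image w) ?_
    rintro _ ⟨s, ⟨K, hK, hsK⟩, rfl⟩
    calc w s ≤ sSup (w '' K) := le_csSup (hbdd K (Set.subset_sUnion_of_mem hK)) ⟨s, hsK, rfl⟩
      _ = m := hF K hK
  · rw [← hF K₀ hK₀]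
    exact csSup_le_csSup (hbdd _ subset_rfl) (hne.image w)
      (Set.image_mono (Set.subset_sUnion_of_mem hK₀))

theorem supremal_minimum_earliness_general {α : Type*} (Suc : Set α)
    (L : Set (List α))
    (H : Set (List α)) (hHfin : H.Finite) (w : List α → ℝ)
    (hex : ∃ K : Set (List α), K ⊆ H ∧ K.Nonempty ∧ Controllable Suc L K) :
    ∃ Khat : Set (List α), Khat ⊆ H ∧ Khat.Nonempty ∧ Controllable Suc L Khat ∧
      ∀ K : Set (List α), K ⊆ H → K.Nonempty → Controllable Suc L K →
        sSup (w '' Khat) ≤ sSup (w '' K) ∧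
        (sSup (w '' K) = sSup (w '' Khat) → K ⊆ Khat) := by
  set 𝒦 : Set (Set (List α)) := {K | K ⊆ H ∧ K.Nonempty ∧ Controllable Suc L K}
  obtain ⟨K₀, hK₀, hmin⟩ := Set.exists_min_image 𝒦 (fun K => sSup (w '' K))
    (hHfin.finite_subsets.subset fun K hK => hK.1) hex
  set F : Set (Set (List α)) := {K | K ∈ 𝒦 ∧ sSup (w '' K) = sSup (w '' K₀)}
  have hK₀F : K₀ ∈ F := ⟨hK₀, rfl⟩
  have hFH : ⋃₀ F ⊆ H := Set.sUnion_subset fun K hK => hK.1.1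
  have hFe : sSup (w '' ⋃₀ F) = sSup (w '' K₀) :=
    csSup_image_sUnion_of_forall_eq (hHfin.subset hFH) hK₀F hK₀.2.1 fun K hK => hK.2
  refine ⟨⋃₀ F, hFH, hK₀.2.1.mono (Set.subset_sUnion_of_mem hK₀F),
    Controllable.sUnion fun K hK => hK.1.2.2, fun K hKH hKne hKc => ⟨?_, fun heq => ?_⟩⟩
  · exact hFe ▸ hmin K ⟨hKH, hKne, hKc⟩
  · exact Set.subset_sUnion_of_mem ⟨⟨hKH, hKne, hKc⟩, heq.trans hFe⟩

/-- Proposition 1: If the finite language `H` contains some nonempty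
controllable sublanguage, then there is a supremal minimum-earliness controllable
sublanguage `Khat ⊆ H`: its earliness `e(Khat) = max_{s ∈ Khat} w s` is minimal among
nonempty controllable sublanguages of `H`, and any nonempty controllable sublanguage
of `H` achieving the same earliness is contained in it. -/
theorem supremal_minimum_earliness {α : Type*} [Fintype α] (Sc Suc : Set α)
    (hpart : Sc ∪ Suc = Set.univ) (hdisj : Disjoint Sc Suc)
    (L : Set (List α)) (hL : PrefixClosed L)
    (H : Set (List α)) (hHfin : H.Finite) (w : List α → ℝ)
    (hex : ∃ K : Set (List α), K ⊆ H ∧ K.Nonempty ∧ Controllable Suc L K) :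
    ∃ Khat : Set (List α), Khat ⊆ H ∧ Khat.Nonempty ∧ Controllable Suc L Khat ∧
      ∀ K : Set (List α), K ⊆ H → K.Nonempty → Controllable Suc L K →
        sSup (w '' Khat) ≤ sSup (w '' K) ∧
        (sSup (w '' K) = sSup (w '' Khat) → K ⊆ Khat) :=
  supremal_minimum_earliness_general Suc L H hHfin w hex
end

section
/- (Uncontrollable-state case of Proposition 2.) Let K ⊆ L be a nonempty finite language controllable with respect to the plant language L, with ε ∉ K, and suppose every event a with a⁻¹K ≠ ∅ belongs to Σ_uc. Let A = {a ∈ Σ | a⁻¹K ≠ ∅}. Then a language K' is a minimal nonempty controllable sublanguage of K with respect to L if and only if there is a choice, for each a ∈ A, of a minimal nonempty controllable sublanguage L_a of a⁻¹K with respect to a⁻¹L, such that K' = ⋃_{a ∈ A} {a}·L_a. -/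
/-- `K1` is a minimal nonempty controllable sublanguage of `K` with respect to the
plant `L`. -/
def IsMinCtrlSub {α : Type*} (Suc : Set α) (L K K1 : Set (List α)) : Prop :=
  K1 ⊆ K ∧ K1.Nonempty ∧ Controllable Suc L K1 ∧
  ∀ K2 : Set (List α), K2 ⊆ K → K2.Nonempty → Controllable Suc L K2 → K2 ⊆ K1 → K2 = K1

/-- The left quotient (derivative) `a⁻¹K = {s | a·s ∈ K}`. -/
def lquot {α : Type*} (a : α) (K : Set (List α)) : Set (List α) := {s | a :: s ∈ K}

section Helpers
variable {α : Type*}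

lemma pref_cons (a : α) (K : Set (List α)) (s : List α) :
    a :: s ∈ pref K ↔ s ∈ pref (lquot a K) := Iff.rfl

lemma nil_mem_pref {K : Set (List α)} (h : K.Nonempty) : ([] : List α) ∈ pref K := by
  obtain ⟨s, hs⟩ := h; exact ⟨s, hs⟩

lemma mem_bUnion_iff (A : Set α) (F : α → Set (List α)) (s : List α) :
    s ∈ (⋃ a ∈ A, (fun s => a :: s) '' F a) ↔ ∃ a ∈ A, ∃ t ∈ F a, s = a :: t := by
  simp [Set.mem_iUnion]
  tauto

lemma down (Suc : Set α) (L : Set (List α)) (hL : PrefixClosed L)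
    (K : Set (List α)) (hKL : K ⊆ L)
    (huc : ∀ a, (lquot a K).Nonempty → a ∈ Suc)
    (K2 : Set (List α)) (hsub : K2 ⊆ K) (hne : K2.Nonempty)
    (hc : Controllable Suc L K2)
    (a : α) (ha : (lquot a K).Nonempty) :
    (lquot a K2).Nonempty ∧ lquot a K2 ⊆ lquot a K ∧
      Controllable Suc (lquot a L) (lquot a K2) := by
  have haS : a ∈ Suc := huc a ha
  have haL : [a] ∈ L := by
    obtain ⟨t, ht⟩ := ha
    exact hL _ (hKL ht) [a] ⟨t, rfl⟩
  have hne' : (lquot a K2).Nonempty := by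
    have := hc [] (nil_mem_pref hne) a haS haL
    obtain ⟨t, ht⟩ := this
    exact ⟨t, ht⟩
  refine ⟨hne', fun s hs => hsub hs, ?_⟩
  intro s hs u hu huL
  have h1 : a :: s ∈ pref K2 := (pref_cons a K2 s).2 hs
  have h2 : (a :: s) ++ [u] ∈ L := huL
  have := hc (a :: s) h1 u hu h2
  exact (pref_cons a K2 (s ++ [u])).1 this

lemma decomp (K K2 : Set (List α)) (hsub : K2 ⊆ K) (heps : [] ∉ K) :
    K2 = ⋃ a ∈ {a : α | (lquot a K).Nonempty}, (fun s => a :: s) '' lquot a K2 := by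
  ext s
  rw [mem_bUnion_iff]
  constructor
  · intro hs
    cases s with
    | nil => exact absurd (hsub hs) heps
    | cons b t => exact ⟨b, ⟨t, hsub hs⟩, t, hs, rfl⟩
  · rintro ⟨b, _, t, ht, rfl⟩
    exact ht

lemma up (Suc : Set α) (L K : Set (List α)) (hKne : K.Nonempty) (heps : [] ∉ K)
    (hKc : Controllable Suc L K)
    (F : α → Set (List α))
    (hF : ∀ a, (lquot a K).Nonempty → (F a).Nonempty ∧ F a ⊆ lquot a K ∧
          Controllable Suc (lquot a L) (F a)) :
    (⋃ a ∈ {a : α | (lquot a K).Nonempty}, (fun s => a :: s) '' F a) ⊆ K ∧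
    (⋃ a ∈ {a : α | (lquot a K).Nonempty}, (fun s => a :: s) '' F a).Nonempty ∧
    Controllable Suc L (⋃ a ∈ {a : α | (lquot a K).Nonempty}, (fun s => a :: s) '' F a) := by
  set K' := ⋃ a ∈ {a : α | (lquot a K).Nonempty}, (fun s => a :: s) '' F a with hK'
  have hmem : ∀ s, s ∈ K' ↔ ∃ a, (lquot a K).Nonempty ∧ ∃ t ∈ F a, s = a :: t := by
    intro s; rw [hK', mem_bUnion_iff]; simp [Set.mem_setOf_eq]
  have hsub : K' ⊆ K := by
    intro s hs
    obtain ⟨a, ha, t, ht, rfl⟩ := (hmem s).1 hs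
    exact (hF a ha).2.1 ht
  have hne : K'.Nonempty := by
    obtain ⟨s, hs⟩ := hKne
    cases s with
    | nil => exact absurd hs heps
    | cons b t =>
      have hb : (lquot b K).Nonempty := ⟨t, hs⟩
      obtain ⟨r, hr⟩ := (hF b hb).1
      exact ⟨b :: r, (hmem _).2 ⟨b, hb, r, hr, rfl⟩⟩
  refine ⟨hsub, hne, ?_⟩
  intro s hs u hu huL
  cases s with
  | nil =>
    have : [u] ∈ pref K := hKc [] (nil_mem_pref hKne) u hu huL
    have hun : (lquot u K).Nonempty := by obtain ⟨t, ht⟩ := this; exact ⟨t, ht⟩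
    obtain ⟨r, hr⟩ := (hF u hun).1
    exact ⟨r, (hmem _).2 ⟨u, hun, r, hr, rfl⟩⟩
  | cons b s' =>
    obtain ⟨t, ht⟩ := hs
    obtain ⟨a, ha, r, hr, heq⟩ := (hmem _).1 ht
    have hba : b = a := by injection heq
    subst hba
    have hrs : s' ++ t = r := by injection heq
    have hs'p : s' ∈ pref (F b) := ⟨t, hrs ▸ hr⟩
    have h2 : s' ++ [u] ∈ lquot b L := huL
    obtain ⟨t', ht'⟩ := (hF b ha).2.2 s' hs'p u hu h2
    exact ⟨t', (hmem _).2 ⟨b, ha, (s' ++ [u]) ++ t', ht', by simp⟩⟩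

lemma lquot_bUnion (K : Set (List α)) (F : α → Set (List α)) (a : α)
    (ha : (lquot a K).Nonempty) :
    lquot a (⋃ b ∈ {b : α | (lquot b K).Nonempty}, (fun s => b :: s) '' F b) = F a := by
  ext s
  constructor
  · intro hs
    obtain ⟨b, hb, t, ht, heq⟩ := (mem_bUnion_iff _ _ _).1 hs
    injection heq with h1 h2
    subst h1; subst h2
    exact ht
  · intro hs
    exact (mem_bUnion_iff _ _ _).2 ⟨a, ha, s, hs, rfl⟩

end Helpers

/-- uncontrollable-state case of Proposition 2: if `ε ∉ K` and every
event with nonempty left quotient of `K` is uncontrollable, then the minimal nonempty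
controllable sublanguages of `K` are exactly the unions, over all events `a` with
`a⁻¹K ≠ ∅`, of `{a}·L_a` for chosen minimal nonempty controllable sublanguages `L_a`
of `a⁻¹K` with respect to `a⁻¹L`. -/
theorem minimal_sublanguage_uncontrollable_state {α : Type*} [Fintype α] (Sc Suc : Set α)
    (hpart : Sc ∪ Suc = Set.univ) (hdisj : Disjoint Sc Suc)
    (L : Set (List α)) (hL : PrefixClosed L)
    (K : Set (List α)) (hKL : K ⊆ L) (hKne : K.Nonempty) (hKfin : K.Finite)
    (hKc : Controllable Suc L K)
    (heps : [] ∉ K)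
    (huc : ∀ a : α, (lquot a K).Nonempty → a ∈ Suc) :
    ∀ K' : Set (List α),
      IsMinCtrlSub Suc L K K' ↔
        ∃ F : α → Set (List α),
          (∀ a : α, (lquot a K).Nonempty →
            IsMinCtrlSub Suc (lquot a L) (lquot a K) (F a)) ∧
          K' = ⋃ a ∈ {a : α | (lquot a K).Nonempty}, (fun s => a :: s) '' F a := by
  intro K'
  constructor
  · rintro ⟨hsub, hne, hc, hmin⟩
    refine ⟨fun a => lquot a K', fun a ha => ?_, decomp K K' hsub heps⟩
    obtain ⟨hne', hsub', hc'⟩ := down Suc L hL K hKL huc K' hsub hne hc a ha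
    refine ⟨hsub', hne', hc', ?_⟩
    intro M hMsub hMne hMc hMK'
    classical
    set G : α → Set (List α) := fun b => if b = a then M else lquot b K' with hG
    have hGprops : ∀ b, (lquot b K).Nonempty → (G b).Nonempty ∧ G b ⊆ lquot b K ∧
        Controllable Suc (lquot b L) (G b) := by
      intro b hb
      by_cases hba : b = a
      · subst hba; simp only [hG, if_pos rfl]; exact ⟨hMne, hMsub, hMc⟩
      · obtain ⟨x, y, z⟩ := down Suc L hL K hKL huc K' hsub hne hc b hb
        simp only [hG, if_neg hba]; exact ⟨x, y, z⟩
    obtain ⟨h1, h2, h3⟩ := up Suc L K hKne heps hKc G hGprops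
    have hK2K' : (⋃ b ∈ {b : α | (lquot b K).Nonempty}, (fun s => b :: s) '' G b) ⊆ K' := by
      intro s hs
      obtain ⟨b, hb, t, ht, rfl⟩ := (mem_bUnion_iff _ _ _).1 hs
      by_cases hba : b = a
      · subst hba
        exact hMK' (by simpa only [hG, if_pos rfl] using ht)
      · simp only [hG, if_neg hba] at ht
        exact ht
    have e2 := hmin _ h1 h2 h3 hK2K'
    have e1 : lquot a (⋃ b ∈ {b : α | (lquot b K).Nonempty}, (fun s => b :: s) '' G b) = M := by
      rw [lquot_bUnion K G a ha]; simp only [hG, if_pos rfl]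
    rw [e2] at e1
    exact e1.symm
  · rintro ⟨F, hF, rfl⟩
    have hFprops : ∀ a, (lquot a K).Nonempty → (F a).Nonempty ∧ F a ⊆ lquot a K ∧
        Controllable Suc (lquot a L) (F a) :=
      fun a ha => ⟨(hF a ha).2.1, (hF a ha).1, (hF a ha).2.2.1⟩
    obtain ⟨h1, h2, h3⟩ := up Suc L K hKne heps hKc F hFprops
    refine ⟨h1, h2, h3, ?_⟩
    intro K2 hK2K hK2ne hK2c hK2sub
    have key : ∀ a, (lquot a K).Nonempty → lquot a K2 = F a := by
      intro a ha
      obtain ⟨n, s, c⟩ := down Suc L hL K hKL huc K2 hK2K hK2ne hK2c a ha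
      have hsubF : lquot a K2 ⊆ F a := by
        intro t ht
        have h := hK2sub ht
        rw [← lquot_bUnion K F a ha]
        exact h
      exact (hF a ha).2.2.2 (lquot a K2) s n c hsubF
    have hdec := decomp K K2 hK2K heps
    rw [hdec]
    ext s
    rw [mem_bUnion_iff, mem_bUnion_iff]
    constructor
    · rintro ⟨a, ha, t, ht, rfl⟩
      exact ⟨a, ha, t, (key a ha) ▸ ht, rfl⟩
    · rintro ⟨a, ha, t, ht, rfl⟩
      exact ⟨a, ha, t, (key a ha).symm ▸ ht, rfl⟩
end

section
/- (Controllable-state case of Proposition 2.) Let K ⊆ L be a nonempty finite language controllable with respect to the plant language L, and suppose no uncontrollable event u ∈ Σ_uc has the one-letter string [u] ∈ L. Then a language K' is a minimal nonempty controllable sublanguage of K with respect to L if and only if either (i) ε ∈ K and K' = {ε}, or (ii) there exist an event a with a⁻¹K ≠ ∅ and a minimal nonempty controllable sublanguage L_a of a⁻¹K with respect to a⁻¹L such that K' = {a}·L_a. -/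
/-!
If no uncontrollable event is possible at the root of the plant, the root imposes no
controllability constraint: `{ε}` is controllable, and `S ↦ {a}·S` is an order isomorphism from
the controllable sublanguages of `a⁻¹K` (with respect to `a⁻¹L`) onto those of `K` whose strings
all start with `a`, so it preserves minimality. A minimal `K'` containing `ε` contains the
controllable `{ε}` and so equals it; otherwise it contains some `a·t`, hence the nonempty
controllable `{a}·(a⁻¹K')`, and so equals that.
-/

section

variable {α : Type*} {Suc : Set α} {L K K₁ K₂ S : Set (List α)} {a : α}

lemma lquot_eq_preimage : lquot a K = (a :: ·) ⁻¹' K := rfl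

lemma lquot_image_cons : lquot a ((a :: ·) '' S) = S :=
  Set.preimage_image_eq S List.cons_injective

lemma IsMinCtrlSub.eq_of_subset (h : IsMinCtrlSub Suc L K K₁) (hne : K₂.Nonempty)
    (hc : Controllable Suc L K₂) (hsub : K₂ ⊆ K₁) : K₂ = K₁ :=
  h.2.2.2 K₂ (hsub.trans h.1) hne hc hsub

lemma controllable_singleton_nil (hnouc : ¬ ∃ u ∈ Suc, [u] ∈ L) :
    Controllable Suc L {[]} := by
  rintro s ⟨t, hst⟩ u hu hsu
  obtain rfl : s = [] := (List.append_eq_nil_iff.mp hst).1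
  exact absurd ⟨u, hu, hsu⟩ hnouc

lemma Controllable.lquot (h : Controllable Suc L K) :
    Controllable Suc (lquot a L) (lquot a K) := by
  rintro s ⟨w, hw⟩ u hu hsu
  obtain ⟨w', hw'⟩ := h (a :: s) ⟨w, hw⟩ u hu hsu
  exact ⟨w', hw'⟩

lemma controllable_image_cons_iff (hnouc : ¬ ∃ u ∈ Suc, [u] ∈ L) :
    Controllable Suc L ((a :: ·) '' S) ↔ Controllable Suc (lquot a L) S := by
  refine ⟨fun h => lquot_image_cons (a := a) (S := S) ▸ h.lquot, fun h => ?_⟩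
  rintro (_ | ⟨b, t⟩) ⟨w, v, hv, hev⟩ u hu hsu
  · exact absurd ⟨u, hu, hsu⟩ hnouc
  · obtain ⟨rfl, rfl⟩ := List.cons_eq_cons.mp hev
    obtain ⟨w', hw'⟩ := h t ⟨w, hv⟩ u hu hsu
    exact ⟨w', _, hw', rfl⟩

lemma isMinCtrlSub_singleton_nil (hnouc : ¬ ∃ u ∈ Suc, [u] ∈ L) (hK : [] ∈ K) :
    IsMinCtrlSub Suc L K {[]} := by
  refine ⟨Set.singleton_subset_iff.mpr hK, Set.singleton_nonempty _,
    controllable_singleton_nil hnouc, fun K₂ _ hne _ hsub => ?_⟩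
  exact (Set.subset_singleton_iff_eq.mp hsub).resolve_left hne.ne_empty

lemma isMinCtrlSub_image_cons_iff (hnouc : ¬ ∃ u ∈ Suc, [u] ∈ L) :
    IsMinCtrlSub Suc L K ((a :: ·) '' S) ↔ IsMinCtrlSub Suc (lquot a L) (lquot a K) S := by
  simp only [IsMinCtrlSub, Set.image_subset_iff, ← lquot_eq_preimage, Set.image_nonempty,
    controllable_image_cons_iff hnouc]
  refine and_congr_right fun _ => and_congr_right fun _ => and_congr_right fun _ => ?_
  constructor
  · intro hmin M hMK hMne hMc hMS
    refine Set.image_injective.mpr List.cons_injective (hmin _ ?_ (hMne.image _) ?_ ?_)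
    · rwa [Set.image_subset_iff]
    · exact (controllable_image_cons_iff hnouc).mpr hMc
    · exact Set.image_mono hMS
  · intro hmin K₂ hK₂K hne hc hsub
    have hK₂ : (a :: ·) '' lquot a K₂ = K₂ :=
      Set.image_preimage_eq_of_subset (hsub.trans (Set.image_subset_range _ _))
    have hsubS : lquot a K₂ ⊆ S := (Set.preimage_mono hsub).trans lquot_image_cons.subset
    rw [← hK₂] at hc hne ⊢
    rw [hmin (lquot a K₂) (fun _ h => hK₂K h) hne.of_image
      ((controllable_image_cons_iff hnouc).mp hc) hsubS]

lemma IsMinCtrlSub.eq_image_cons_lquot (hnouc : ¬ ∃ u ∈ Suc, [u] ∈ L)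
    (h : IsMinCtrlSub Suc L K K₁) {t : List α} (ht : a :: t ∈ K₁) :
    K₁ = (a :: ·) '' lquot a K₁ :=
  (h.eq_of_subset (Set.Nonempty.image _ (⟨t, ht⟩ : (lquot a K₁).Nonempty))
    ((controllable_image_cons_iff hnouc).mpr h.2.2.1.lquot) (Set.image_preimage_subset _ _)).symm

end

theorem minimal_sublanguage_controllable_state_general {α : Type*} (Suc : Set α)
    (L : Set (List α)) (K : Set (List α))
    (hnouc : ¬ ∃ u ∈ Suc, [u] ∈ L) :
    ∀ K' : Set (List α),
      IsMinCtrlSub Suc L K K' ↔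
        (([] ∈ K ∧ K' = {[]}) ∨
          ∃ a : α, (lquot a K).Nonempty ∧
            ∃ La : Set (List α), IsMinCtrlSub Suc (lquot a L) (lquot a K) La ∧
              K' = (fun s => a :: s) '' La) := by
  intro K'
  constructor
  · intro hK'
    by_cases hnil : [] ∈ K'
    · exact Or.inl ⟨hK'.1 hnil, (hK'.eq_of_subset (Set.singleton_nonempty _)
        (controllable_singleton_nil hnouc) (Set.singleton_subset_iff.mpr hnil)).symm⟩
    · obtain ⟨_ | ⟨a, t⟩, ht⟩ := hK'.2.1
      · exact absurd ht hnil
      have hK'eq := IsMinCtrlSub.eq_image_cons_lquot hnouc hK' ht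
      refine Or.inr ⟨a, ⟨t, hK'.1 ht⟩, lquot a K', ?_, hK'eq⟩
      exact (isMinCtrlSub_image_cons_iff hnouc).mp (hK'eq ▸ hK')
  · rintro (⟨hK, rfl⟩ | ⟨a, -, La, hLa, rfl⟩)
    · exact isMinCtrlSub_singleton_nil hnouc hK
    · exact (isMinCtrlSub_image_cons_iff hnouc).mpr hLa

/-- controllable-state case of Proposition 2: if no uncontrollable event
`u` has `[u] ∈ L`, then the minimal nonempty controllable sublanguages of `K` are
exactly `{ε}` (when `ε ∈ K`) and the languages `{a}·L_a` where `a⁻¹K ≠ ∅` and `L_a`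
is a minimal nonempty controllable sublanguage of `a⁻¹K` with respect to `a⁻¹L`. -/
theorem minimal_sublanguage_controllable_state {α : Type*} [Fintype α] (Sc Suc : Set α)
    (hpart : Sc ∪ Suc = Set.univ) (hdisj : Disjoint Sc Suc)
    (L : Set (List α)) (hL : PrefixClosed L)
    (K : Set (List α)) (hKL : K ⊆ L) (hKne : K.Nonempty) (hKfin : K.Finite)
    (hKc : Controllable Suc L K)
    (hnouc : ¬ ∃ u ∈ Suc, [u] ∈ L) :
    ∀ K' : Set (List α),
      IsMinCtrlSub Suc L K K' ↔
        (([] ∈ K ∧ K' = {[]}) ∨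
          ∃ a : α, (lquot a K).Nonempty ∧
            ∃ La : Set (List α), IsMinCtrlSub Suc (lquot a L) (lquot a K) La ∧
              K' = (fun s => a :: s) '' La) :=
  minimal_sublanguage_controllable_state_general Suc L K hnouc
end

section
/- Let Σ be a type, A ⊆ Σ, and s a finite list over Σ containing at least one element of A. Let v be a real-valued function on lists over Σ that is monotone with respect to the prefix order (if t is a prefix of t' then v(t) ≤ v(t')). Then the minimum of v over the set of prefixes t of s whose A-filtered subsequence equals the A-filtered subsequence of s equals the maximum of v over the set of nonempty prefixes t of s whose last element belongs to A; both sets are finite and nonempty, and both optima equal v(t₀), where t₀ is the longest prefix of s ending with an element of A. -/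
/-!
Let `t₀` be `s` with its trailing letters outside `A` removed. A prefix of `s` has the same
`A`-projection as `s` exactly when the part of `s` after it contains no letter of `A`, so every
such prefix extends `t₀`; and a prefix of `s` ending in a letter of `A` cannot reach into that
removed tail, so it is a prefix of `t₀`. Since `t₀` lies in both sets, monotonicity of `v` makes
`v t₀` the least value on the first set and the greatest on the second.
-/

namespace List

variable {α : Type*}

theorem finite_setOf_isPrefix (s : List α) : {t | t <+: s}.Finite :=
  s.inits.finite_toSet.subset fun t ht => (mem_inits t s).2 ht

section rdropWhile

variable (p : α → Bool)

theorem rdropWhile_append_of_forall {l d : List α} (hd : ∀ x ∈ d, p x) :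
    (l ++ d).rdropWhile p = l.rdropWhile p := by
  rw [rdropWhile, rdropWhile, reverse_append, dropWhile_append_of_pos (by simpa using hd)]

theorem rdropWhile_prefix_rdropWhile_append (l d : List α) :
    l.rdropWhile p <+: (l ++ d).rdropWhile p := by
  rw [rdropWhile, rdropWhile, reverse_append, dropWhile_append]
  split
  · exact prefix_rfl
  · rw [reverse_append, reverse_reverse]
    exact (rdropWhile_prefix p l).trans (prefix_append _ _)

theorem filter_rdropWhile_not (s : List α) :
    (s.rdropWhile (fun x => !p x)).filter p = s.filter p := by
  conv_rhs => rw [← rdropWhile_append_rtakeWhile (p := fun x => !p x) (l := s)]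
  rw [filter_append, eq_comm, append_right_eq_self, filter_eq_nil_iff]
  intro x hx
  simpa using mem_rtakeWhile_imp hx

theorem rdropWhile_not_prefix_of_filter_eq {s t : List α} (hts : t <+: s)
    (h : t.filter p = s.filter p) : s.rdropWhile (fun x => !p x) <+: t := by
  obtain ⟨d, rfl⟩ := hts
  have hd : d.filter p = [] := by rwa [filter_append, eq_comm, append_right_eq_self] at h
  rw [rdropWhile_append_of_forall _ fun x hx => by simpa using filter_eq_nil_iff.1 hd x hx]
  exact rdropWhile_prefix _ _

theorem concat_prefix_rdropWhile_not {s t : List α} {a : α} (hts : t ++ [a] <+: s)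
    (ha : p a) : t ++ [a] <+: s.rdropWhile (fun x => !p x) := by
  obtain ⟨d, rfl⟩ := hts
  simpa [rdropWhile_concat_neg, ha] using
    rdropWhile_prefix_rdropWhile_append (fun x => !p x) (t ++ [a]) d

theorem exists_rdropWhile_not_eq_concat {s : List α} (h : ∃ a ∈ s, p a) :
    ∃ a, p a ∧ ∃ t, s.rdropWhile (fun x => !p x) = t ++ [a] := by
  have hne : s.rdropWhile (fun x => !p x) ≠ [] := by
    rw [Ne, rdropWhile_eq_nil_iff]
    push Not
    simpa using h
  exact ⟨_, by simpa using rdropWhile_last_not _ _ hne, _, (dropLast_append_getLast hne).symm⟩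

end rdropWhile

end List

open List

/-- Let `A ⊆ α` and let `s` be a list containing at least one element of
`A`, and let `v` be monotone with respect to the prefix order. Consider
`S1` = prefixes of `s` whose `A`-filtered subsequence equals that of `s`, and
`S2` = nonempty prefixes of `s` whose last element lies in `A`. Then both sets are
finite and nonempty, and `min_{t ∈ S1} v t = max_{t ∈ S2} v t = v t₀`, where `t₀` is
the longest prefix of `s` ending with an element of `A`. -/
theorem min_matching_prefix_eq_max_lastA_prefix {α : Type*} (A : Set α)
    [DecidablePred (· ∈ A)] (s : List α) (hs : ∃ a ∈ A, a ∈ s)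
    (v : List α → ℝ) (hv : ∀ t t' : List α, t <+: t' → v t ≤ v t') :
    let S1 : Set (List α) :=
      {t | t <+: s ∧ t.filter (fun x => decide (x ∈ A)) =
                     s.filter (fun x => decide (x ∈ A))}
    let S2 : Set (List α) :=
      {t | t <+: s ∧ ∃ a ∈ A, ∃ t' : List α, t = t' ++ [a]}
    S1.Finite ∧ S2.Finite ∧ S1.Nonempty ∧ S2.Nonempty ∧
    ∃ t0 ∈ S2, (∀ t ∈ S2, t.length ≤ t0.length) ∧
      sInf (v '' S1) = v t0 ∧ sSup (v '' S2) = v t0 ∧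
      sInf (v '' S1) = sSup (v '' S2) := by
  intro S1 S2
  set p : α → Bool := fun x => decide (x ∈ A)
  set t0 := s.rdropWhile (fun x => !p x)
  have ht0s : t0 <+: s := rdropWhile_prefix _ s
  obtain ⟨a, haA, t', ht0⟩ :=
    exists_rdropWhile_not_eq_concat p (s := s) (by simpa [p, and_comm] using hs)
  have ht0S1 : t0 ∈ S1 := ⟨ht0s, filter_rdropWhile_not p s⟩
  have ht0S2 : t0 ∈ S2 := ⟨ht0s, a, by simpa [p] using haA, t', ht0⟩
  have hS1 : ∀ t ∈ S1, t0 <+: t := fun t ht => rdropWhile_not_prefix_of_filter_eq p ht.1 ht.2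
  have hS2 : ∀ t ∈ S2, t <+: t0 := by
    rintro t ⟨hts, b, hbA, t'', rfl⟩
    exact concat_prefix_rdropWhile_not p hts (by simpa [p] using hbA)
  have hInf : sInf (v '' S1) = v t0 := IsLeast.csInf_eq
    ⟨⟨t0, ht0S1, rfl⟩, Set.forall_mem_image.2 fun t ht => hv _ _ (hS1 t ht)⟩
  have hSup : sSup (v '' S2) = v t0 := IsGreatest.csSup_eq
    ⟨⟨t0, ht0S2, rfl⟩, Set.forall_mem_image.2 fun t ht => hv _ _ (hS2 t ht)⟩
  exact ⟨(finite_setOf_isPrefix s).subset fun _ ht => ht.1,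
    (finite_setOf_isPrefix s).subset fun _ ht => ht.1, ⟨t0, ht0S1⟩, ⟨t0, ht0S2⟩,
    t0, ht0S2, fun t ht => (hS2 t ht).length_le, hInf, hSup, hInf.trans hSup.symm⟩
end
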